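/- The quasisymmetric monomial glide M̄_α(y_1,...,y_n) = ∑_{σ∈P_α} μ_{P_α}(σ) y^σ has lowest-degree homogeneous component equal to the truncated monomial quasisymmetric function M_{n,α} = ∑_{i_1<⋯<i_k} y_{i_1}^{α_1}⋯y_{i_k}^{α_k}; consequently the family {M̄_α} (over all compositions α of length ≤ n) is linearly independent over ℚ. -/

import Mathlib

open MvPolynomial Finset
open scoped Classical

/-- The positive part of a weak composition: delete the zero entries. -/
def posList (l : List ℕ) : List ℕ := l.filter (fun x => x ≠ 0)

/-- `S_α`: length-`n` tuples of nonnegative integers whose positive part is `α`. -/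
def Sset (α : List ℕ) (n : ℕ) : Set (Fin n → ℕ) :=
  {b | posList (List.ofFn b) = α}

/-- `P_α`: componentwise maxima of nonempty collections of elements of `S_α`. -/
def Pset (α : List ℕ) (n : ℕ) : Set (Fin n → ℕ) :=
  {σ | ∃ T : Finset (Fin n → ℕ), T.Nonempty ∧ (↑T : Set (Fin n → ℕ)) ⊆ Sset α n ∧ σ = T.sup id}

/-- The local moves (M.1): `0p ↦ p0` and (M.2'): `0p ↦ pp` for `p > 0`. -/
inductive GlideMove : List ℕ → List ℕ → Prop
  | m1 (u v : List ℕ) (p : ℕ) (hp : 0 < p) :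
      GlideMove (u ++ 0 :: p :: v) (u ++ p :: 0 :: v)
  | m2 (u v : List ℕ) (p : ℕ) (hp : 0 < p) :
      GlideMove (u ++ 0 :: p :: v) (u ++ p :: p :: v)

/-- `C_α`: strings obtainable from elements of `S_α` by iterated local moves. -/
def Cset (α : List ℕ) (n : ℕ) : Set (Fin n → ℕ) :=
  {σ | ∃ b ∈ Sset α n, Relation.ReflTransGen GlideMove (List.ofFn b) (List.ofFn σ)}

/-- The exponent vector placing `β_t` in position `j_t`. -/
noncomputable def expVec {n k : ℕ} (j : Fin k → Fin n) (β : Fin k → ℕ) : Fin n →₀ ℕ :=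
  Finsupp.equivFunOnFinite.symm (fun i => ∑ t : Fin k, if j t = i then β t else 0)

/-- A polynomial is quasisymmetric if, for every composition `β` and any two strictly
increasing index sequences, the corresponding monomials have equal coefficients. -/
def IsQuasisymmetric {n : ℕ} {R : Type*} [CommSemiring R] (f : MvPolynomial (Fin n) R) : Prop :=
  ∀ (k : ℕ) (β : Fin k → ℕ), (∀ t, 0 < β t) →
    ∀ j j' : Fin k → Fin n, StrictMono j → StrictMono j' →
      f.coeff (expVec j β) = f.coeff (expVec j' β)

/-- The truncated monomial quasisymmetric function
`M_{n,α} = ∑_{i_1 < ⋯ < i_k ≤ n} x_{i_1}^{α_1} ⋯ x_{i_k}^{α_k}`. -/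
noncomputable def Mqs (n : ℕ) (α : List ℕ) : MvPolynomial (Fin n) ℤ :=
  ∑ j ∈ Finset.univ.filter (fun j : Fin α.length → Fin n => StrictMono j),
    ∏ t : Fin α.length, X (j t) ^ α.get t

/-!
Every `σ ∈ P_α` dominates an element of `S_α`, so `|σ| ≥ |α|`, with equality exactly on `S_α`.
Hence the elements of `S_α` are minimal in `P_α` and the defining recursion gives them `μ = 1`;
as `S_α` is in bijection with the strictly increasing index sequences, the degree-`|α|` part
of `M̄_α` is `M_{n,α}`. For independence, let `b_α ∈ S_α` put `α` into the first positions: the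
monomial `y^{b_α}` occurs in `M̄_β` with `|β| ≥ |α|` only if `b_α ∈ S_β`, i.e. `β = α`, so the
family is unitriangular with respect to `|α|`.
-/

theorem eq_of_le_of_sum_le {ι : Type*} [Fintype ι] {f g : ι → ℕ} (h : f ≤ g)
    (hs : ∑ i, g i ≤ ∑ i, f i) : f = g :=
  h.eq_of_not_lt fun hlt => (Fintype.sum_strictMono hlt).not_ge hs

theorem eq_one_of_minimal {β M : Type*} [Preorder β] [AddCommMonoid M] [One M] {F : Finset β}
    {μ : β → M} (hμ : ∀ p ∈ F, ∑ q ∈ F.filter (fun q => q ≤ p), μ q = 1) {b : β} (hb : b ∈ F)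
    (hmin : ∀ q ∈ F, q ≤ b → q = b) : μ b = 1 := by
  have : F.filter (fun q => q ≤ b) = {b} := by
    ext q
    simp only [mem_filter, mem_singleton]
    exact ⟨fun ⟨hq, hqb⟩ => hmin q hq hqb, by rintro rfl; exact ⟨hb, le_rfl⟩⟩
  simpa [this] using hμ b hb

theorem linearIndependent_of_triangular {ι κ R M : Type*} [LinearOrder κ] [Ring R]
    [AddCommGroup M] [Module R M] {v : ι → M} (φ : ι → M →ₗ[R] R) (w : ι → κ)
    (hdiag : ∀ i, φ i (v i) = 1) (hoff : ∀ i j, i ≠ j → w j ≤ w i → φ j (v i) = 0) :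
    LinearIndependent R v := by
  rw [linearIndependent_iff']
  intro s g hsum i₀ hi₀
  by_contra hg₀
  obtain ⟨j, hj, hmin⟩ :=
    (s.filter fun i => g i ≠ 0).exists_min_image w ⟨i₀, mem_filter.mpr ⟨hi₀, hg₀⟩⟩
  obtain ⟨hjs, hgj⟩ := mem_filter.mp hj
  have hφ := congrArg (φ j) hsum
  rw [map_sum, map_zero, sum_eq_single j (fun i hi hij => ?_) (fun h => absurd hjs h), map_smul,
    hdiag, smul_eq_mul, mul_one] at hφ
  · exact hgj hφ
  · by_cases hgi : g i = 0
    · rw [hgi, zero_smul, map_zero]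
    · rw [map_smul, hoff i j hij (hmin i (mem_filter.mpr ⟨hi, hgi⟩)), smul_zero]

section PolyOfExponents

variable {ι R : Type*} [Fintype ι] [CommSemiring R]

noncomputable def polyOfExponents (F : Finset (ι → ℕ)) (c : (ι → ℕ) → R) : MvPolynomial ι R :=
  ∑ σ ∈ F, c σ • ∏ i, X i ^ σ i

theorem polyOfExponents_congr {F : Finset (ι → ℕ)} {c c' : (ι → ℕ) → R}
    (h : ∀ σ ∈ F, c σ = c' σ) : polyOfExponents F c = polyOfExponents F c' :=
  sum_congr rfl fun σ hσ => by rw [h σ hσ]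

theorem prod_X_pow_eq_monomial_equivFunOnFinite (σ : ι → ℕ) :
    ∏ i, (X i : MvPolynomial ι R) ^ σ i = monomial (Finsupp.equivFunOnFinite.symm σ) 1 := by
  rw [← prod_X_pow_eq_monomial]
  exact (prod_subset (subset_univ _) fun i _ hi => by simp_all).symm

theorem coeff_polyOfExponents (F : Finset (ι → ℕ)) (c : (ι → ℕ) → R) (m : ι →₀ ℕ) :
    coeff m (polyOfExponents F c) = if ⇑m ∈ F then c m else 0 := by
  simp [polyOfExponents, coeff_sum, prod_X_pow_eq_monomial_equivFunOnFinite, coeff_monomial,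
    Equiv.symm_apply_eq]
  rfl

theorem homogeneousComponent_polyOfExponents (d : ℕ) (F : Finset (ι → ℕ)) (c : (ι → ℕ) → R) :
    homogeneousComponent d (polyOfExponents F c) =
      polyOfExponents (F.filter fun σ => ∑ i, σ i = d) c := by
  simp_rw [polyOfExponents, map_sum, sum_filter, map_smul]
  refine sum_congr rfl fun σ _ => ?_
  rw [prod_X_pow_eq_monomial_equivFunOnFinite, homogeneousComponent_of_mem
    ((mem_homogeneousSubmodule _ _).mpr (isHomogeneous_monomial _ rfl))]
  simp [Finsupp.degree_eq_sum, eq_comm]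

end PolyOfExponents

theorem posList_sum (l : List ℕ) : (posList l).sum = l.sum := by
  induction l with
  | nil => rfl
  | cons a l ih => by_cases ha : a = 0 <;> simp_all [posList]

theorem posList_ofFn_eq_ofFn_comp {n k : ℕ} {b : Fin n → ℕ} {j : Fin k → Fin n}
    (hj : StrictMono j) (hb : ∀ i, b i ≠ 0 ↔ i ∈ Set.range j) :
    posList (List.ofFn b) = List.ofFn (b ∘ j) := by
  have hsupp : (List.finRange n).filter (fun i => b i ≠ 0) = List.ofFn j := by
    refine List.SortedLT.eq_of_mem_iff ?_ (List.sortedLT_ofFn_iff.mpr hj) fun i => ?_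
    · exact ((List.sortedLT_finRange n).pairwise.filter _).sortedLT
    · simp [List.mem_ofFn', hb]
  rw [posList, List.ofFn_eq_map, List.filter_map, ← List.map_ofFn, ← hsupp]
  rfl

theorem sum_eq_of_mem_Sset {α : List ℕ} {n : ℕ} {b : Fin n → ℕ} (hb : b ∈ Sset α n) :
    ∑ i, b i = α.sum := by
  rw [← List.sum_ofFn, ← posList_sum, hb]

theorem Sset_subset_Pset (α : List ℕ) (n : ℕ) : Sset α n ⊆ Pset α n :=
  fun b hb => ⟨{b}, singleton_nonempty b, by simpa using hb, by simp⟩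

theorem exists_le_of_mem_Pset {α : List ℕ} {n : ℕ} {σ : Fin n → ℕ} (hσ : σ ∈ Pset α n) :
    ∃ b ∈ Sset α n, b ≤ σ := by
  obtain ⟨T, ⟨b, hbT⟩, hTS, rfl⟩ := hσ
  exact ⟨b, hTS hbT, le_sup (f := id) hbT⟩

theorem sum_le_of_mem_Pset {α : List ℕ} {n : ℕ} {σ : Fin n → ℕ} (hσ : σ ∈ Pset α n) :
    α.sum ≤ ∑ i, σ i := by
  obtain ⟨b, hb, hbσ⟩ := exists_le_of_mem_Pset hσ
  rw [← sum_eq_of_mem_Sset hb]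
  exact sum_le_sum fun i _ => hbσ i

theorem mem_Sset_of_mem_Pset_of_sum_le {α : List ℕ} {n : ℕ} {σ : Fin n → ℕ}
    (hσ : σ ∈ Pset α n) (hsum : ∑ i, σ i ≤ α.sum) : σ ∈ Sset α n := by
  obtain ⟨b, hb, hbσ⟩ := exists_le_of_mem_Pset hσ
  exact eq_of_le_of_sum_le hbσ (sum_eq_of_mem_Sset hb ▸ hsum) ▸ hb

theorem eq_of_mem_Pset_of_le_of_mem_Sset {α : List ℕ} {n : ℕ} {b q : Fin n → ℕ}
    (hb : b ∈ Sset α n) (hq : q ∈ Pset α n) (hqb : q ≤ b) : q = b :=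
  eq_of_le_of_sum_le hqb (sum_eq_of_mem_Sset hb ▸ sum_le_of_mem_Pset hq)

section ExpVec

variable {n k : ℕ}

theorem expVec_apply (j : Fin k → Fin n) (β : Fin k → ℕ) (i : Fin n) :
    expVec j β i = ∑ t, if j t = i then β t else 0 := rfl

theorem expVec_eq_sum_single (j : Fin k → Fin n) (β : Fin k → ℕ) :
    expVec j β = ∑ t, Finsupp.single (j t) (β t) := by
  ext i
  simp [expVec_apply, Finsupp.single_apply]

theorem expVec_apply_self {j : Fin k → Fin n} (hj : Function.Injective j) (β : Fin k → ℕ)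
    (t : Fin k) : expVec j β (j t) = β t := by
  rw [expVec_apply, sum_eq_single t (fun s _ hst => if_neg (hj.ne hst)) (by simp), if_pos rfl]

theorem expVec_apply_of_notMem_range {j : Fin k → Fin n} {i : Fin n} (hi : i ∉ Set.range j)
    (β : Fin k → ℕ) : expVec j β i = 0 := by
  rw [expVec_apply]
  exact sum_eq_zero fun t _ => if_neg fun h => hi ⟨t, h⟩

theorem expVec_comp_eq {j : Fin k → Fin n} (hj : Function.Injective j) {b : Fin n → ℕ}
    (hb : ∀ i ∉ Set.range j, b i = 0) : ⇑(expVec j (b ∘ j)) = b := by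
  funext i
  by_cases hi : i ∈ Set.range j
  · obtain ⟨t, rfl⟩ := hi
    exact expVec_apply_self hj _ t
  · rw [expVec_apply_of_notMem_range hi, hb i hi]

theorem expVec_ne_zero_iff {j : Fin k → Fin n} (hj : Function.Injective j) {β : Fin k → ℕ}
    (hβ : ∀ t, β t ≠ 0) (i : Fin n) : expVec j β i ≠ 0 ↔ i ∈ Set.range j := by
  refine ⟨fun h => by_contra fun hi => h (expVec_apply_of_notMem_range hi β), ?_⟩
  rintro ⟨t, rfl⟩
  rw [expVec_apply_self hj]
  exact hβ t

theorem expVec_injective_of_strictMono {β : Fin k → ℕ} (hβ : ∀ t, β t ≠ 0)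
    {j j' : Fin k → Fin n} (hj : StrictMono j) (hj' : StrictMono j')
    (h : expVec j β = expVec j' β) : j = j' := by
  refine hj.range_inj hj' |>.mp (Set.ext fun i => ?_)
  rw [← expVec_ne_zero_iff hj.injective hβ, ← expVec_ne_zero_iff hj'.injective hβ, h]

end ExpVec

theorem expVec_mem_Sset {α : List ℕ} {n : ℕ} (hα : ∀ a ∈ α, 0 < a)
    {j : Fin α.length → Fin n} (hj : StrictMono j) : ⇑(expVec j α.get) ∈ Sset α n := by
  have hβ : ∀ t, α.get t ≠ 0 := fun t => (hα _ (α.get_mem t)).ne'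
  show posList _ = α
  rw [posList_ofFn_eq_ofFn_comp hj (expVec_ne_zero_iff hj.injective hβ)]
  conv_rhs => rw [← List.ofFn_get α]
  congr 1
  funext t
  exact expVec_apply_self hj.injective _ t

theorem exists_strictMono_expVec_eq_of_mem_Sset {α : List ℕ} {n : ℕ} {b : Fin n → ℕ}
    (hb : b ∈ Sset α n) : ∃ j : Fin α.length → Fin n, StrictMono j ∧ ⇑(expVec j α.get) = b := by
  obtain ⟨m, e, he, hsupp⟩ : ∃ m, ∃ e : Fin m → Fin n, StrictMono e ∧
      ∀ i, b i ≠ 0 ↔ i ∈ Set.range e :=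
    ⟨_, _, ((univ.filter fun i => b i ≠ 0).orderEmbOfFin rfl).strictMono, by simp⟩
  have hα : List.ofFn (b ∘ e) = α := (posList_ofFn_eq_ofFn_comp he hsupp).symm.trans hb
  subst hα
  have hj : StrictMono (e ∘ Fin.cast (List.length_ofFn (f := b ∘ e))) := fun _ _ h => he h
  refine ⟨_, hj, ?_⟩
  convert expVec_comp_eq hj.injective fun i hi => ?_
  · funext t
    simp only [List.get_ofFn]
    rfl
  · by_contra hbi
    obtain ⟨t, rfl⟩ := (hsupp i).mp hbi
    exact hi ⟨Fin.cast List.length_ofFn.symm t, rfl⟩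

theorem prod_X_pow_expVec {n k : ℕ} {R : Type*} [CommSemiring R] (j : Fin k → Fin n)
    (β : Fin k → ℕ) :
    ∏ i, (X i : MvPolynomial (Fin n) R) ^ expVec j β i = ∏ t, X (j t) ^ β t := by
  rw [prod_X_pow_eq_monomial_equivFunOnFinite]
  simp_rw [Finsupp.equivFunOnFinite_symm_coe, expVec_eq_sum_single, monomial_sum_one,
    X_pow_eq_monomial]

theorem Mqs_eq_polyOfExponents {α : List ℕ} {n : ℕ} (hα : ∀ a ∈ α, 0 < a)
    {T : Finset (Fin n → ℕ)} (hT : ∀ b, b ∈ T ↔ b ∈ Sset α n) :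
    Mqs n α = polyOfExponents T 1 := by
  have hβ : ∀ t, α.get t ≠ 0 := fun t => (hα _ (α.get_mem t)).ne'
  refine sum_bij (fun j _ => ⇑(expVec j α.get)) (fun j hj => ?_) (fun j hj j' hj' h => ?_)
    (fun b hb => ?_) (fun j _ => ?_)
  · exact (hT _).mpr (expVec_mem_Sset hα (mem_filter.mp hj).2)
  · exact expVec_injective_of_strictMono hβ (mem_filter.mp hj).2 (mem_filter.mp hj').2
      (DFunLike.coe_injective h)
  · obtain ⟨j, hj, rfl⟩ := exists_strictMono_expVec_eq_of_mem_Sset ((hT b).mp hb)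
    exact ⟨j, mem_filter.mpr ⟨mem_univ j, hj⟩, rfl⟩
  · rw [prod_X_pow_expVec, Pi.one_apply, one_smul]

section Glide

variable {n : ℕ} {α : List ℕ} {P : Finset (Fin n → ℕ)}

theorem eq_one_of_mem_Sset {M : Type*} [AddCommMonoid M] [One M] {μ : (Fin n → ℕ) → M}
    (hP : (↑P : Set (Fin n → ℕ)) = Pset α n)
    (hμ : ∀ p ∈ P, ∑ q ∈ P.filter (fun q => q ≤ p), μ q = 1) {b : Fin n → ℕ}
    (hb : b ∈ Sset α n) : μ b = 1 := by
  have hmem : ∀ σ, σ ∈ P ↔ σ ∈ Pset α n := Set.ext_iff.mp hP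
  exact eq_one_of_minimal hμ ((hmem b).mpr (Sset_subset_Pset α n hb)) fun q hq =>
    eq_of_mem_Pset_of_le_of_mem_Sset hb ((hmem q).mp hq)

theorem homogeneousComponent_polyOfExponents_Pset_of_lt {R : Type*} [CommSemiring R]
    (hP : (↑P : Set (Fin n → ℕ)) = Pset α n) (c : (Fin n → ℕ) → R) {d : ℕ} (hd : d < α.sum) :
    homogeneousComponent d (polyOfExponents P c) = 0 := by
  have hmem : ∀ σ, σ ∈ P ↔ σ ∈ Pset α n := Set.ext_iff.mp hP
  rw [homogeneousComponent_polyOfExponents, filter_eq_empty_iff.mpr fun σ hσ =>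
    (hd.trans_le (sum_le_of_mem_Pset ((hmem σ).mp hσ))).ne']
  exact sum_empty

theorem homogeneousComponent_polyOfExponents_Pset_eq_Mqs (hα : ∀ a ∈ α, 0 < a)
    (hP : (↑P : Set (Fin n → ℕ)) = Pset α n) {μ : (Fin n → ℕ) → ℤ}
    (hμ : ∀ p ∈ P, ∑ q ∈ P.filter (fun q => q ≤ p), μ q = 1) :
    homogeneousComponent α.sum (polyOfExponents P μ) = Mqs n α := by
  have hmem : ∀ σ, σ ∈ P ↔ σ ∈ Pset α n := Set.ext_iff.mp hP
  have hS : ∀ b, b ∈ P.filter (fun σ => ∑ i, σ i = α.sum) ↔ b ∈ Sset α n := fun b => by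
    rw [mem_filter, hmem]
    exact ⟨fun h => mem_Sset_of_mem_Pset_of_sum_le h.1 h.2.le,
      fun h => ⟨Sset_subset_Pset α n h, sum_eq_of_mem_Sset h⟩⟩
  rw [homogeneousComponent_polyOfExponents, Mqs_eq_polyOfExponents hα hS]
  exact polyOfExponents_congr fun b hb => eq_one_of_mem_Sset hP hμ ((hS b).mp hb)

end Glide

theorem linearIndependent_polyOfExponents_Pset {n : ℕ} {R : Type*} [CommRing R]
    (F : List ℕ → Finset (Fin n → ℕ))
    (hF : ∀ α : List ℕ, (∀ a ∈ α, 0 < a) → α.length ≤ n → (↑(F α) : Set (Fin n → ℕ)) = Pset α n)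
    (μ : List ℕ → (Fin n → ℕ) → R)
    (hμ : ∀ α : List ℕ, (∀ a ∈ α, 0 < a) → α.length ≤ n →
      ∀ p ∈ F α, ∑ q ∈ (F α).filter (fun q => q ≤ p), μ α q = 1) :
    LinearIndependent R fun α : {α : List ℕ // (∀ a ∈ α, 0 < a) ∧ α.length ≤ n} =>
      polyOfExponents (F α.1) (μ α.1) := by
  let b₀ (α : {α : List ℕ // (∀ a ∈ α, 0 < a) ∧ α.length ≤ n}) : Fin n →₀ ℕ :=
    expVec (Fin.castLE α.2.2) α.1.get
  have hb₀ : ∀ α, ⇑(b₀ α) ∈ Sset α.1 n :=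
    fun α => expVec_mem_Sset α.2.1 (Fin.strictMono_castLE _)
  have hmem : ∀ (α : {α : List ℕ // (∀ a ∈ α, 0 < a) ∧ α.length ≤ n}) σ,
      σ ∈ F α.1 ↔ σ ∈ Pset α.1 n :=
    fun α => Set.ext_iff.mp (hF α.1 α.2.1 α.2.2)
  refine linearIndependent_of_triangular (fun α => lcoeff R (b₀ α)) (fun α => α.1.sum)
    (fun α => ?_) (fun α β hne hle => ?_) <;> simp only [lcoeff_apply, coeff_polyOfExponents]
  · rw [if_pos ((hmem α _).mpr (Sset_subset_Pset _ n (hb₀ α))),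
      eq_one_of_mem_Sset (hF _ α.2.1 α.2.2) (hμ _ α.2.1 α.2.2) (hb₀ α)]
  · refine if_neg fun hb => hne (Subtype.ext ?_)
    have hbα := mem_Sset_of_mem_Pset_of_sum_le ((hmem α _).mp hb)
      ((sum_eq_of_mem_Sset (hb₀ β)).trans_le hle)
    exact hbα.symm.trans (hb₀ β)

/-- The quasisymmetric monomial glide `M̄_α = ∑_{σ∈P_α} μ_{P_α}(σ) y^σ` has lowest-degree
homogeneous component equal to the truncated monomial quasisymmetric function `M_{n,α}`
(its homogeneous component in degree `|α|` is `M_{n,α}` and all lower components vanish);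
consequently, the family `{M̄_α}` over compositions of length at most `n` is linearly
independent over ℚ. -/
theorem stmt_17 (n : ℕ)
    (F : List ℕ → Finset (Fin n → ℕ))
    (hF : ∀ α : List ℕ, (∀ a ∈ α, 0 < a) → α.length ≤ n →
      (↑(F α) : Set (Fin n → ℕ)) = Pset α n)
    (μ : List ℕ → (Fin n → ℕ) → ℤ)
    (hμ : ∀ α : List ℕ, (∀ a ∈ α, 0 < a) → α.length ≤ n →
      ∀ p ∈ F α, ∑ q ∈ (F α).filter (fun q => q ≤ p), μ α q = 1) :
    (∀ α : List ℕ, (∀ a ∈ α, 0 < a) → α.length ≤ n →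
      (MvPolynomial.homogeneousComponent α.sum
          (∑ σ ∈ F α, μ α σ • ∏ i : Fin n, (X i : MvPolynomial (Fin n) ℤ) ^ σ i)
        = Mqs n α ∧
       ∀ d : ℕ, d < α.sum →
        MvPolynomial.homogeneousComponent d
          (∑ σ ∈ F α, μ α σ • ∏ i : Fin n, (X i : MvPolynomial (Fin n) ℤ) ^ σ i) = 0)) ∧
    LinearIndependent ℚ
      (fun α : {α : List ℕ // (∀ a ∈ α, 0 < a) ∧ α.length ≤ n} =>
        ∑ σ ∈ F α.1, (μ α.1 σ : ℚ) • ∏ i : Fin n, (X i : MvPolynomial (Fin n) ℚ) ^ σ i) := by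
  refine ⟨fun α hα hlen => ⟨?_, fun d hd => ?_⟩, ?_⟩
  · exact homogeneousComponent_polyOfExponents_Pset_eq_Mqs hα (hF α hα hlen) (hμ α hα hlen)
  · exact homogeneousComponent_polyOfExponents_Pset_of_lt (hF α hα hlen) _ hd
  · exact linearIndependent_polyOfExponents_Pset F hF (fun α σ => (μ α σ : ℚ))
      fun α hα hlen p hp => by exact_mod_cast hμ α hα hlen p hp
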